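/- arXiv:1907.06979 — 7 statements merged into one kernel-verified Lean document; each statement's English description precedes it below -/
import Mathlib

section
/- Let (g,[·,·],α,β) be a regular BiHom-Lie algebra over a field K of characteristic zero, let V be a K-vector space equipped with two commuting bijective linear maps φ,ψ: V → V, and let ρ: g → End(V) be a linear map. Then (V,ρ,φ,ψ) is a representation of (g,[·,·],α,β) if and only if the direct sum g ⊕ V, equipped with the bracket [x+u, y+v]_ρ = [x,y] + ρ(x)v − ρ(α⁻¹β(y))φψ⁻¹(u) and the maps (α+φ)(x+u) = α(x)+φ(u) and (β+ψ)(x+u) = β(x)+ψ(u), is a BiHom-Lie algebra. -/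
def IsLin (K : Type*) [Field K] {A B : Type*} [AddCommGroup A] [Module K A]
    [AddCommGroup B] [Module K B] (f : A → B) : Prop :=
  ∀ (c : K) (x y : A), f (c • x + y) = c • f x + f y

def IsBilin (K : Type*) [Field K] {A B C : Type*} [AddCommGroup A] [Module K A]
    [AddCommGroup B] [Module K B] [AddCommGroup C] [Module K C] (f : A → B → C) : Prop :=
  (∀ (c : K) (x x' : A) (y : B), f (c • x + x') y = c • f x y + f x' y) ∧
  (∀ (c : K) (x : A) (y y' : B), f x (c • y + y') = c • f x y + f x y')

/-- A BiHom-Lie algebra structure: a bilinear bracket together with two commuting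
multiplicative linear maps `α, β` satisfying BiHom-skew-symmetry and the BiHom-Jacobi
identity. -/
def IsBiHomLie (K : Type*) [Field K] {g : Type*} [AddCommGroup g] [Module K g]
    (br : g → g → g) (α β : g → g) : Prop :=
  IsBilin K br ∧ IsLin K α ∧ IsLin K β ∧
  (∀ x, α (β x) = β (α x)) ∧
  (∀ x y, α (br x y) = br (α x) (α y)) ∧
  (∀ x y, β (br x y) = br (β x) (β y)) ∧
  (∀ x y, br (β x) (α y) = - br (β y) (α x)) ∧
  (∀ x y z, br (β (β x)) (br (β y) (α z)) + br (β (β y)) (br (β z) (α x))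
      + br (β (β z)) (br (β x) (α y)) = 0)

/-- A BiHom-left-symmetric algebra structure: a bilinear product together with two
commuting multiplicative linear maps `α, β` satisfying the BiHom-left-symmetric identity. -/
def IsBiHomLS (K : Type*) [Field K] {A : Type*} [AddCommGroup A] [Module K A]
    (mul : A → A → A) (α β : A → A) : Prop :=
  IsBilin K mul ∧ IsLin K α ∧ IsLin K β ∧
  (∀ x, α (β x) = β (α x)) ∧
  (∀ x y, α (mul x y) = mul (α x) (α y)) ∧
  (∀ x y, β (mul x y) = mul (β x) (β y)) ∧
  (∀ x y z,
    mul (mul (β x) (α y)) (α (β z)) - mul (α (β x)) (mul (α y) z)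
      = mul (mul (β y) (α x)) (α (β z)) - mul (α (β y)) (mul (α x) z))

/-- A representation of a BiHom-Lie algebra `(g, br, α, β)` on `V` with respect to
commuting linear maps `φ, ψ`. -/
def IsBiHomLieRep (K : Type*) [Field K] {g V : Type*} [AddCommGroup g] [Module K g]
    [AddCommGroup V] [Module K V] (br : g → g → g) (α β : g → g)
    (ρ : g → V →ₗ[K] V) (φ ψ : V →ₗ[K] V) : Prop :=
  IsLin K ρ ∧ (∀ v, φ (ψ v) = ψ (φ v)) ∧
  (∀ x, ρ (α x) ∘ₗ φ = φ ∘ₗ ρ x) ∧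
  (∀ x, ρ (β x) ∘ₗ ψ = ψ ∘ₗ ρ x) ∧
  (∀ x y, ρ (br (β x) y) ∘ₗ ψ = ρ (α (β x)) ∘ₗ ρ y - ρ (β y) ∘ₗ ρ (α x))

/-- A representation `(V, L, R, φ, ψ)` of a BiHom-left-symmetric algebra `(A, mul, α, β)`. -/
def IsBiHomLSRep (K : Type*) [Field K] {A V : Type*} [AddCommGroup A] [Module K A]
    [AddCommGroup V] [Module K V] (mul : A → A → A) (α β : A → A)
    (L R : A → V →ₗ[K] V) (φ ψ : V →ₗ[K] V) : Prop :=
  IsLin K L ∧ IsLin K R ∧ (∀ v, φ (ψ v) = ψ (φ v)) ∧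
  (∀ x, φ ∘ₗ L x = L (α x) ∘ₗ φ) ∧
  (∀ x, ψ ∘ₗ L x = L (β x) ∘ₗ ψ) ∧
  (∀ x, φ ∘ₗ R x = R (α x) ∘ₗ φ) ∧
  (∀ x, ψ ∘ₗ R x = R (β x) ∘ₗ ψ) ∧
  (∀ x y, L (mul (β x) (α y)) ∘ₗ ψ - L (α (β x)) ∘ₗ L (α y)
      = L (mul (β y) (α x)) ∘ₗ ψ - L (α (β y)) ∘ₗ L (α x)) ∧
  (∀ x y, R (β x) ∘ₗ L (β y) ∘ₗ φ - L (α (β y)) ∘ₗ R x ∘ₗ φ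
      = R (β x) ∘ₗ R (α y) ∘ₗ ψ - R (mul (α y) x) ∘ₗ φ ∘ₗ ψ)

/-- `(V, ρ, φ, ψ)` is a representation of a regular BiHom-Lie algebra
`(g, br, α, β)` if and only if the semidirect-product bracket makes `g × V` a
BiHom-Lie algebra. -/
theorem stmt0 (K : Type*) [Field K] [CharZero K]
    {g V : Type*} [AddCommGroup g] [Module K g] [AddCommGroup V] [Module K V]
    (br : g → g → g) (α β : g ≃ₗ[K] g)
    (hg : IsBiHomLie K br (⇑α) (⇑β))
    (φ ψ : V ≃ₗ[K] V) (hφψ : ∀ v, φ (ψ v) = ψ (φ v))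
    (ρ : g → V →ₗ[K] V) (hρ : IsLin K ρ) :
    IsBiHomLieRep K br (⇑α) (⇑β) ρ φ.toLinearMap ψ.toLinearMap ↔
      IsBiHomLie K
        (fun p q : g × V =>
          (br p.1 q.1, ρ p.1 q.2 - ρ (α.symm (β q.1)) (φ (ψ.symm p.2))))
        (fun p : g × V => (α p.1, φ p.2)) (fun p : g × V => (β p.1, ψ p.2)) := by
  obtain ⟨⟨hbl, hbr⟩, hαlin, hβlin, hcomm, hαm, hβm, hskew, hjac⟩ := hg
  have hρ0 : ρ 0 = 0 := by have h := hρ 1 (0 : g) 0; simpa using h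
  have αsymmβ : ∀ x, α.symm (β x) = β (α.symm x) := fun x =>
    α.injective (by rw [α.apply_symm_apply, hcomm, α.apply_symm_apply])
  have ψsymmφ : ∀ v, ψ.symm (φ v) = φ (ψ.symm v) := fun v =>
    ψ.injective (by rw [ψ.apply_symm_apply, ← hφψ, ψ.apply_symm_apply])
  have φsymmψ : ∀ v, φ.symm (ψ v) = ψ (φ.symm v) := fun v =>
    φ.injective (by rw [φ.apply_symm_apply, hφψ, φ.apply_symm_apply])
  have hψφ : ∀ v, ψ (φ v) = φ (ψ v) := fun v => (hφψ v).symm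
  have αsymm_br : ∀ u v, α.symm (br u v) = br (α.symm u) (α.symm v) := fun u v =>
    α.injective (by rw [α.apply_symm_apply, hαm, α.apply_symm_apply, α.apply_symm_apply])
  constructor
  · rintro ⟨-, -, h3, h4, h5⟩
    have h3'' : ∀ x v, φ (ρ x v) = ρ (α x) (φ v) := fun x v => by
      have h := LinearMap.ext_iff.mp (h3 x) v; simpa using h.symm
    have h4'' : ∀ x v, ψ (ρ x v) = ρ (β x) (ψ v) := fun x v => by
      have h := LinearMap.ext_iff.mp (h4 x) v; simpa using h.symm
    have h5' : ∀ x y v, ρ (br (β x) y) (ψ v)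
        = ρ (α (β x)) (ρ y v) - ρ (β y) (ρ (α x) v) := fun x y v => by
      have h := LinearMap.ext_iff.mp (h5 x y) v; simpa using h
    have key : ∀ y z u, ρ (β (br (β (α.symm y)) z)) (φ (ψ u))
        = ρ (β (β y)) (ρ (β z) (φ u)) - ρ (β (β z)) (ρ (β y) (φ u)) := by
      intro y z u
      have e := h5' (β (α.symm y)) (β z) (φ u)
      rw [hβm, hφψ, e]
      simp [hcomm, α.apply_symm_apply]
    refine ⟨⟨?_, ?_⟩, ?_, ?_, ?_, ?_, ?_, ?_, ?_⟩
    · intro c p p' q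
      have h := hρ c p.1 p'.1
      simp [Prod.ext_iff, hbl, h, map_add, map_smul, smul_sub, LinearMap.add_apply,
        LinearMap.smul_apply]
      module
    · intro c p q q'
      have h := hρ c (α.symm (β q.1)) (α.symm (β q'.1))
      simp [Prod.ext_iff, hbr, hρ, map_add, map_smul, h, LinearMap.add_apply,
        LinearMap.smul_apply]
      module
    · intro c p q
      simp [Prod.ext_iff, hαlin c p.1 q.1, map_add, map_smul]
    · intro c p q
      simp [Prod.ext_iff, hβlin c p.1 q.1, map_add, map_smul]
    · intro p
      simp [Prod.ext_iff, hcomm, hφψ]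
    · intro p q
      simp [Prod.ext_iff, hαm, map_sub, h3'', αsymmβ, ψsymmφ, hcomm, α.apply_symm_apply]
    · intro p q
      simp [Prod.ext_iff, hβm, map_sub, h4'', αsymmβ, hψφ]
    · intro p q
      refine Prod.ext (hskew p.1 q.1) ?_
      simp [αsymmβ, neg_sub]
    · intro p q r
      refine Prod.ext (by simpa using hjac p.1 q.1 r.1) ?_
      simp only [Prod.snd_add, Prod.snd_zero, map_sub, αsymmβ, αsymm_br,
        LinearEquiv.symm_apply_apply, key]
      abel
  · rintro ⟨-, -, -, -, hmα, hmβ, hsk, hjc⟩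
    have ax3 : ∀ x, ρ (α x) ∘ₗ (φ : V →ₗ[K] V) = (φ : V →ₗ[K] V) ∘ₗ ρ x := by
      intro x
      ext v
      have h := congrArg Prod.snd (hmα (x, 0) (0, v))
      simp only [map_zero, hρ0, LinearMap.zero_apply, sub_zero] at h
      simpa using h.symm
    have ax4 : ∀ x, ρ (β x) ∘ₗ (ψ : V →ₗ[K] V) = (ψ : V →ₗ[K] V) ∘ₗ ρ x := by
      intro x
      ext v
      have h := congrArg Prod.snd (hmβ (x, 0) (0, v))
      simp only [map_zero, hρ0, LinearMap.zero_apply, sub_zero] at h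
      simpa using h.symm
    have hder : ∀ x y w, ρ (β (β x)) (ρ (β y) (φ w)) - ρ (β (β y)) (ρ (β x) (φ w))
        - ρ (α.symm (β (br (β x) (α y)))) (φ (ψ w)) = 0 := by
      intro x y w
      have h := congrArg Prod.snd (hjc (x, 0) (y, 0) (0, w))
      simpa only [map_zero, hρ0, LinearMap.zero_apply, sub_zero, zero_sub, map_neg,
        Prod.snd_add, Prod.snd_zero, LinearEquiv.symm_apply_apply, αsymmβ,
        sub_eq_add_neg, neg_zero, add_zero, zero_add] using h
    refine ⟨hρ, hφψ, ax3, ax4, ?_⟩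
    intro x y
    ext v
    have h := hder (β.symm (α x)) (β.symm y) (φ.symm v)
    rw [sub_eq_zero] at h
    simp only [β.apply_symm_apply, hβm, αsymm_br, αsymmβ, LinearEquiv.symm_apply_apply,
      φ.apply_symm_apply, hφψ, hcomm] at h ⊢
    simpa using h.symm
end

section
/- Let (V,L,R,φ,ψ) be a representation of a regular BiHom-left-symmetric algebra (A,·,α,β) over a field K of characteristic zero. Then (V,L,φ,ψ) is a representation of the sub-adjacent BiHom-Lie algebra A^C, i.e. L satisfies L(α(x))φ = φL(x), L(β(x))ψ = ψL(x), and L([β(x),y]_C)ψ = L(αβ(x))L(y) − L(β(y))L(α(x)) for all x,y ∈ A, where [x,y]_C = x·y − α⁻¹β(y)·αβ⁻¹(x). -/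
/-- for a representation `(V, L, R, φ, ψ)` of a regular BiHom-left-symmetric
algebra, `(V, L, φ, ψ)` is a representation of the sub-adjacent BiHom-Lie algebra `A^C`,
with bracket `[x,y]_C = x·y − α⁻¹β(y)·αβ⁻¹(x)`. -/
theorem stmt3 (K : Type*) [Field K] [CharZero K]
    {A V : Type*} [AddCommGroup A] [Module K A] [AddCommGroup V] [Module K V]
    (mul : A → A → A) (α β : A ≃ₗ[K] A)
    (halg : IsBiHomLS K mul (⇑α) (⇑β))
    (L R : A → V →ₗ[K] V) (φ ψ : V →ₗ[K] V)
    (hrep : IsBiHomLSRep K mul (⇑α) (⇑β) L R φ ψ) :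
    IsBiHomLieRep K
      (fun x y => mul x y - mul (α.symm (β y)) (α (β.symm x)))
      (⇑α) (⇑β) L φ ψ := by
  obtain ⟨hbil, hαl, hβl, hcomm, hαm, hβm, hls⟩ := halg
  obtain ⟨hLlin, hRlin, hφψ, hφL, hψL, hφR, hψR, h8, h9⟩ := hrep
  have Lsub : ∀ a b : A, L (a - b) = L a - L b := by
    intro a b
    have := hLlin (-1 : K) b a
    simpa [neg_smul, one_smul, sub_eq_neg_add] using this
  refine ⟨hLlin, hφψ, fun x => (hφL x).symm, fun x => (hψL x).symm, fun x y => ?_⟩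
  have key := h8 x (α.symm y)
  have h1 : α (α.symm y) = y := α.apply_symm_apply y
  have h2 : β (α.symm y) = α.symm (β y) := by
    apply α.injective
    rw [hcomm, h1, α.apply_symm_apply]
  have h3 : α (β (α.symm y)) = β y := by rw [h2, α.apply_symm_apply]
  rw [h1, h2, α.apply_symm_apply] at key
  simp only [β.symm_apply_apply, Lsub, LinearMap.sub_comp]
  exact sub_eq_sub_iff_sub_eq_sub.mp key
end

section
/- Let (V,L,R,φ,ψ) be a representation of a regular BiHom-left-symmetric algebra (A,·,α,β) over a field K of characteristic zero, with φ and ψ bijective. Define ρ: A → End(V) by ρ(x) = L(x) − R(αβ⁻¹(x))∘φ⁻¹ψ. Then (V,ρ,φ,ψ) is a representation of the sub-adjacent BiHom-Lie algebra A^C, whose bracket is [x,y]_C = x·y − α⁻¹β(y)·αβ⁻¹(x). -/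
/-- for a representation `(V, L, R, φ, ψ)` of a regular BiHom-left-symmetric
algebra with `φ, ψ` bijective, `ρ(x) = L(x) − R(αβ⁻¹(x)) ∘ φ⁻¹ψ` defines a representation
of the sub-adjacent BiHom-Lie algebra `A^C`. -/
theorem stmt4 (K : Type*) [Field K] [CharZero K]
    {A V : Type*} [AddCommGroup A] [Module K A] [AddCommGroup V] [Module K V]
    (mul : A → A → A) (α β : A ≃ₗ[K] A)
    (halg : IsBiHomLS K mul (⇑α) (⇑β))
    (L R : A → V →ₗ[K] V) (φ ψ : V ≃ₗ[K] V)
    (hrep : IsBiHomLSRep K mul (⇑α) (⇑β) L R φ.toLinearMap ψ.toLinearMap) :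
    IsBiHomLieRep K
      (fun x y => mul x y - mul (α.symm (β y)) (α (β.symm x)))
      (⇑α) (⇑β)
      (fun x => L x - R (α (β.symm x)) ∘ₗ (φ.symm.toLinearMap ∘ₗ ψ.toLinearMap))
      φ.toLinearMap ψ.toLinearMap := by
  obtain ⟨hmulbil, hαlin, hβlin, hαβ, hαmul, hβmul, hls⟩ := halg
  obtain ⟨hL, hR, hcomm, hφL, hψL, hφR, hψR, hI, hII⟩ := hrep
  -- pointwise versions of the representation axioms
  have hcomm' : ∀ v : V, φ (ψ v) = ψ (φ v) := fun v => by simpa using hcomm v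
  have hφL' : ∀ x u, φ (L x u) = L (α x) (φ u) := fun x u => by
    simpa using DFunLike.congr_fun (hφL x) u
  have hψL' : ∀ x u, ψ (L x u) = L (β x) (ψ u) := fun x u => by
    simpa using DFunLike.congr_fun (hψL x) u
  have hφR' : ∀ x u, φ (R x u) = R (α x) (φ u) := fun x u => by
    simpa using DFunLike.congr_fun (hφR x) u
  have hψR' : ∀ x u, ψ (R x u) = R (β x) (ψ u) := fun x u => by
    simpa using DFunLike.congr_fun (hψR x) u
  have hI' : ∀ x y v, L (mul (β x) (α y)) (ψ v) - L (α (β x)) (L (α y) v)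
      = L (mul (β y) (α x)) (ψ v) - L (α (β y)) (L (α x) v) := fun x y v => by
    simpa using DFunLike.congr_fun (hI x y) v
  have hII' : ∀ x y v, R (β x) (L (β y) (φ v)) - L (α (β y)) (R x (φ v))
      = R (β x) (R (α y) (ψ v)) - R (mul (α y) x) (φ (ψ v)) := fun x y v => by
    simpa using DFunLike.congr_fun (hII x y) v
  -- commutation lemmas on A
  have hβsα : ∀ x : A, β.symm (α x) = α (β.symm x) := fun x => by
    apply β.injective
    rw [β.apply_symm_apply, ← hαβ, β.apply_symm_apply]
  have hαsβ : ∀ x : A, α.symm (β x) = β (α.symm x) := fun x => by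
    apply α.injective
    rw [α.apply_symm_apply, hαβ, α.apply_symm_apply]
  have hsymms : ∀ x : A, β.symm (α.symm x) = α.symm (β.symm x) := fun x => by
    apply α.injective
    rw [← hβsα, α.apply_symm_apply]
    rw [α.apply_symm_apply]
  -- commutation lemmas on V
  have hcφs : ∀ v : V, φ.symm (ψ v) = ψ (φ.symm v) := fun v => by
    apply φ.injective
    rw [φ.apply_symm_apply, hcomm', φ.apply_symm_apply]
  have hφsL : ∀ x u, φ.symm (L x u) = L (α.symm x) (φ.symm u) := fun x u => by
    apply φ.injective
    rw [φ.apply_symm_apply, hφL', α.apply_symm_apply, φ.apply_symm_apply]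
  have hφsR : ∀ x u, φ.symm (R x u) = R (α.symm x) (φ.symm u) := fun x u => by
    apply φ.injective
    rw [φ.apply_symm_apply, hφR', α.apply_symm_apply, φ.apply_symm_apply]
  -- multiplicativity of β.symm
  have hβsmul : ∀ a b, β.symm (mul a b) = mul (β.symm a) (β.symm b) := fun a b => by
    apply β.injective
    rw [β.apply_symm_apply, hβmul, β.apply_symm_apply, β.apply_symm_apply]
  -- subtraction lemmas for L and R
  have hLsub : ∀ u w, L (u - w) = L u - L w := fun u w => by
    have h := hL (-1 : K) w u
    rw [show u - w = (-1 : K) • w + u from by module, h]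
    module
  have hRsub : ∀ u w, R (u - w) = R u - R w := fun u w => by
    have h := hR (-1 : K) w u
    rw [show u - w = (-1 : K) • w + u from by module, h]
    module
  refine ⟨?_, hcomm, ?_, ?_, ?_⟩
  · -- linearity of ρ
    intro c x y
    ext v
    simp only [LinearMap.sub_apply, LinearMap.add_apply, LinearMap.smul_apply,
      LinearMap.comp_apply, LinearEquiv.coe_coe, map_add, map_smul, hL c x y,
      hR c (α (β.symm x)) (α (β.symm y)), smul_sub]
    abel
  · -- φ-equivariance
    intro x
    ext v
    simp only [LinearMap.sub_apply, LinearMap.comp_apply, LinearEquiv.coe_coe,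
      map_sub, hφL', hφR', hβsα, ← hcomm', ← hcφs, hφsL, hφsR,
      φ.apply_symm_apply, φ.symm_apply_apply, α.apply_symm_apply, α.symm_apply_apply,
      β.apply_symm_apply, β.symm_apply_apply, ← hαβ, ← hαsβ, hsymms]
  · -- ψ-equivariance
    intro x
    ext v
    simp only [LinearMap.sub_apply, LinearMap.comp_apply, LinearEquiv.coe_coe,
      map_sub, hψL', hψR', hβsα, ← hcomm', ← hcφs, hφsL, hφsR,
      φ.apply_symm_apply, φ.symm_apply_apply, α.apply_symm_apply, α.symm_apply_apply,
      β.apply_symm_apply, β.symm_apply_apply, ← hαβ, ← hαsβ, hsymms]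
  · -- the main identity
    intro x y
    ext v
    have E1 := hI' x (α.symm y) v
    have E2 := hII' (β.symm (α (α x))) (α.symm y) (φ.symm (φ.symm (ψ v)))
    have E3 := hII' (α (β.symm y)) x (φ.symm (φ.symm (ψ v)))
    simp only [LinearMap.sub_apply, LinearMap.comp_apply, LinearEquiv.coe_coe,
      hLsub, hRsub, map_sub, hβsmul, hαmul, hβmul,
      hφL', hψL', hφR', hψR', hφsL, hφsR, ← hcomm', ← hcφs,
      φ.apply_symm_apply, φ.symm_apply_apply, hβsα, hsymms, ← hαβ, ← hαsβ,
      α.apply_symm_apply, α.symm_apply_apply, β.apply_symm_apply, β.symm_apply_apply]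
      at E1 E2 E3 ⊢
    linear_combination (norm := abel) E1 + E2 - E3
end

section
/- Let (A,·,α,β) be a regular BiHom-left-symmetric algebra over a field K of characteristic zero, and let (V, L_V, R_V, φ_V, ψ_V) and (W, L_W, R_W, φ_W, ψ_W) be representations of A with φ_W, ψ_W bijective. Then the tensor product V ⊗ W, equipped with the maps x ↦ L_V(x) ⊗ ψ_W + ψ_V ⊗ (L_W(x) − R_W(αβ⁻¹(x))∘φ_W⁻¹ψ_W) as left action, x ↦ R_V(x) ⊗ φ_W as right action, and the structure maps φ_V ⊗ φ_W and ψ_V ⊗ ψ_W, is a representation of (A,·,α,β). -/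
open scoped TensorProduct

/-- the tensor product of two representations of a regular
BiHom-left-symmetric algebra is again a representation, with left action
`L_V(x) ⊗ ψ_W + ψ_V ⊗ (L_W(x) − R_W(αβ⁻¹(x)) ∘ φ_W⁻¹ψ_W)`, right action
`R_V(x) ⊗ φ_W`, and structure maps `φ_V ⊗ φ_W`, `ψ_V ⊗ ψ_W`. -/
theorem stmt10 (K : Type*) [Field K] [CharZero K]
    {A V W : Type*} [AddCommGroup A] [Module K A]
    [AddCommGroup V] [Module K V] [AddCommGroup W] [Module K W]
    (mul : A → A → A) (α β : A ≃ₗ[K] A)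
    (halg : IsBiHomLS K mul (⇑α) (⇑β))
    (LV RV : A → V →ₗ[K] V) (φV ψV : V →ₗ[K] V)
    (hV : IsBiHomLSRep K mul (⇑α) (⇑β) LV RV φV ψV)
    (LW RW : A → W →ₗ[K] W) (φW ψW : W ≃ₗ[K] W)
    (hW : IsBiHomLSRep K mul (⇑α) (⇑β) LW RW φW.toLinearMap ψW.toLinearMap) :
    IsBiHomLSRep K mul (⇑α) (⇑β)
      (fun x => TensorProduct.map (LV x) ψW.toLinearMap
        + TensorProduct.map ψV
            (LW x - RW (α (β.symm x)) ∘ₗ (φW.symm.toLinearMap ∘ₗ ψW.toLinearMap)))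
      (fun x => TensorProduct.map (RV x) φW.toLinearMap)
      (TensorProduct.map φV φW.toLinearMap)
      (TensorProduct.map ψV ψW.toLinearMap) := by
  obtain ⟨hLVlin, hRVlin, pφψV, hφLV, hψLV, hφRV, hψRV, hV8, hV9⟩ := hV
  obtain ⟨hLWlin, hRWlin, hφψW, hφLW, hψLW, hφRW, hψRW, hW8, hW9⟩ := hW
  obtain ⟨-, -, -, hαβ, hαmul, hβmul, -⟩ := halg
  have pLVlin : ∀ (c : K) (a b : A), LV (c • a + b) = c • LV a + LV b := hLVlin
  have pRVlin : ∀ (c : K) (a b : A), RV (c • a + b) = c • RV a + RV b := hRVlin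
  have pLWlin : ∀ (c : K) (a b : A), LW (c • a + b) = c • LW a + LW b := hLWlin
  have pRWlin : ∀ (c : K) (a b : A), RW (c • a + b) = c • RW a + RW b := hRWlin
  -- pointwise lemmas on V
  have pφLV : ∀ x v, φV (LV x v) = LV (α x) (φV v) := fun x v => by
    have := DFunLike.congr_fun (hφLV x) v; simpa using this
  have pψLV : ∀ x v, ψV (LV x v) = LV (β x) (ψV v) := fun x v => by
    have := DFunLike.congr_fun (hψLV x) v; simpa using this
  have pφRV : ∀ x v, φV (RV x v) = RV (α x) (φV v) := fun x v => by
    have := DFunLike.congr_fun (hφRV x) v; simpa using this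
  have pψRV : ∀ x v, ψV (RV x v) = RV (β x) (ψV v) := fun x v => by
    have := DFunLike.congr_fun (hψRV x) v; simpa using this
  -- pointwise lemmas on W
  have pφψW : ∀ w, φW (ψW w) = ψW (φW w) := fun w => by simpa using hφψW w
  have pφLW : ∀ x w, φW (LW x w) = LW (α x) (φW w) := fun x w => by
    have := DFunLike.congr_fun (hφLW x) w; simpa using this
  have pψLW : ∀ x w, ψW (LW x w) = LW (β x) (ψW w) := fun x w => by
    have := DFunLike.congr_fun (hψLW x) w; simpa using this
  have pφRW : ∀ x w, φW (RW x w) = RW (α x) (φW w) := fun x w => by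
    have := DFunLike.congr_fun (hφRW x) w; simpa using this
  have pψRW : ∀ x w, ψW (RW x w) = RW (β x) (ψW w) := fun x w => by
    have := DFunLike.congr_fun (hψRW x) w; simpa using this
  have pφsLW : ∀ x w, φW.symm (LW x w) = LW (α.symm x) (φW.symm w) := fun x w => by
    apply φW.injective
    rw [φW.apply_symm_apply, pφLW, φW.apply_symm_apply, α.apply_symm_apply]
  have pφsRW : ∀ x w, φW.symm (RW x w) = RW (α.symm x) (φW.symm w) := fun x w => by
    apply φW.injective
    rw [φW.apply_symm_apply, pφRW, φW.apply_symm_apply, α.apply_symm_apply]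
  have pψφsW : ∀ w, φW.symm (ψW w) = ψW (φW.symm w) := fun w => by
    apply φW.injective
    rw [φW.apply_symm_apply, pφψW, φW.apply_symm_apply]
  -- pointwise lemmas on A
  have pαβs : ∀ a, α (β.symm a) = β.symm (α a) := fun a => by
    apply β.injective
    rw [← hαβ, β.apply_symm_apply, β.apply_symm_apply]
  have pαsβ : ∀ a, α.symm (β a) = β (α.symm a) := fun a => by
    apply α.injective
    rw [α.apply_symm_apply, hαβ, α.apply_symm_apply]
  have pαsβs : ∀ a, α.symm (β.symm a) = β.symm (α.symm a) := fun a => by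
    apply α.injective
    rw [α.apply_symm_apply, pαβs, α.apply_symm_apply]
  have pβsmul : ∀ a b, β.symm (mul a b) = mul (β.symm a) (β.symm b) := fun a b => by
    apply β.injective
    rw [β.apply_symm_apply, hβmul, β.apply_symm_apply, β.apply_symm_apply]
  have pαsmul : ∀ a b, α.symm (mul a b) = mul (α.symm a) (α.symm b) := fun a b => by
    apply α.injective
    rw [α.apply_symm_apply, hαmul, α.apply_symm_apply, α.apply_symm_apply]
  -- pointwise versions of the two compatibility identities
  have pV8 : ∀ x y v, LV (mul (β x) (α y)) (ψV v) - LV (α (β x)) (LV (α y) v)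
      = LV (mul (β y) (α x)) (ψV v) - LV (α (β y)) (LV (α x) v) := fun x y v => by
    have := DFunLike.congr_fun (hV8 x y) v; simpa using this
  have pV9 : ∀ x y v, RV (β x) (LV (β y) (φV v)) - LV (α (β y)) (RV x (φV v))
      = RV (β x) (RV (α y) (ψV v)) - RV (mul (α y) x) (φV (ψV v)) := fun x y v => by
    have := DFunLike.congr_fun (hV9 x y) v; simpa using this
  have pW8 : ∀ x y w, LW (mul (β x) (α y)) (ψW w) - LW (α (β x)) (LW (α y) w)
      = LW (mul (β y) (α x)) (ψW w) - LW (α (β y)) (LW (α x) w) := fun x y w => by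
    have := DFunLike.congr_fun (hW8 x y) w; simpa using this
  have pW9 : ∀ x y w, RW (β x) (LW (β y) (φW w)) - LW (α (β y)) (RW x (φW w))
      = RW (β x) (RW (α y) (ψW w)) - RW (mul (α y) x) (φW (ψW w)) := fun x y w => by
    have := DFunLike.congr_fun (hW9 x y) w; simpa using this
  -- the key identity for the twisted action on W
  have star : ∀ x y w,
      (LW (mul (β x) (α y)) - RW (α (β.symm (mul (β x) (α y)))) ∘ₗ
          (φW.symm.toLinearMap ∘ₗ ψW.toLinearMap)) (ψW w)
        - (LW (α (β x)) - RW (α (β.symm (α (β x)))) ∘ₗ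
            (φW.symm.toLinearMap ∘ₗ ψW.toLinearMap))
          ((LW (α y) - RW (α (β.symm (α y))) ∘ₗ
            (φW.symm.toLinearMap ∘ₗ ψW.toLinearMap)) w)
      = (LW (mul (β y) (α x)) - RW (α (β.symm (mul (β y) (α x)))) ∘ₗ
          (φW.symm.toLinearMap ∘ₗ ψW.toLinearMap)) (ψW w)
        - (LW (α (β y)) - RW (α (β.symm (α (β y)))) ∘ₗ
            (φW.symm.toLinearMap ∘ₗ ψW.toLinearMap))
          ((LW (α x) - RW (α (β.symm (α x))) ∘ₗ
            (φW.symm.toLinearMap ∘ₗ ψW.toLinearMap)) w) := by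
    intro x y w
    have h8 := pW8 x y w
    have h9a := pW9 (α (α (β.symm x))) y (φW.symm (φW.symm (ψW w)))
    have h9b := pW9 (α (α (β.symm y))) x (φW.symm (φW.symm (ψW w)))
    simp only [LinearMap.sub_apply, LinearMap.comp_apply, LinearEquiv.coe_coe, map_sub,
      pφLW, pψLW, pφRW, pψRW, pφψW, pφsLW, pφsRW, pψφsW, hαβ, pαβs, pαsβ, pαsβs,
      hαmul, hβmul, pαsmul, pβsmul, LinearEquiv.apply_symm_apply,
      LinearEquiv.symm_apply_apply] at h8 h9a h9b ⊢
    linear_combination (norm := module) h8 + h9a - h9b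
  refine ⟨?_, ?_, ?_, ?_, ?_, ?_, ?_, ?_, ?_⟩
  · -- linearity of the left action
    intro c x y
    refine TensorProduct.ext' fun v w => ?_
    simp only [LinearMap.add_apply, LinearMap.smul_apply, TensorProduct.map_tmul,
      LinearMap.sub_apply, LinearMap.comp_apply, LinearEquiv.coe_coe,
      map_add, map_smul, pLVlin, pLWlin, pRWlin]
    simp only [LinearMap.add_apply, LinearMap.smul_apply, TensorProduct.add_tmul,
      TensorProduct.tmul_add, TensorProduct.smul_tmul', TensorProduct.tmul_smul,
      TensorProduct.sub_tmul, TensorProduct.tmul_sub]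
    simp only [← TensorProduct.smul_tmul']
    module
  · -- linearity of the right action
    intro c x y
    refine TensorProduct.ext' fun v w => ?_
    simp only [LinearMap.add_apply, LinearMap.smul_apply, TensorProduct.map_tmul,
      LinearEquiv.coe_coe, map_add, map_smul, pRVlin]
    simp only [LinearMap.add_apply, LinearMap.smul_apply, TensorProduct.add_tmul,
      TensorProduct.smul_tmul']
  · -- the structure maps commute
    have h : (TensorProduct.map φV φW.toLinearMap) ∘ₗ (TensorProduct.map ψV ψW.toLinearMap)
        = (TensorProduct.map ψV ψW.toLinearMap) ∘ₗ (TensorProduct.map φV φW.toLinearMap) := by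
      refine TensorProduct.ext' fun v w => ?_
      simp [pφψV, pφψW]
    intro v
    simpa using DFunLike.congr_fun h v
  · -- φ ∘ L x = L (α x) ∘ φ
    intro x
    refine TensorProduct.ext' fun v w => ?_
    simp [pφLV, pψLV, pφRV, pψRV, pφψV, pφLW, pψLW, pφRW, pψRW, pφψW, pφsLW, pφsRW,
      pψφsW, hαβ, pαβs, pαsβ, pαsβs, hαmul, hβmul, pαsmul, pβsmul,
      TensorProduct.tmul_sub, TensorProduct.tmul_add]
  · -- ψ ∘ L x = L (β x) ∘ ψ
    intro x
    refine TensorProduct.ext' fun v w => ?_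
    simp [pφLV, pψLV, pφRV, pψRV, pφψV, pφLW, pψLW, pφRW, pψRW, pφψW, pφsLW, pφsRW,
      pψφsW, hαβ, pαβs, pαsβ, pαsβs, hαmul, hβmul, pαsmul, pβsmul,
      TensorProduct.tmul_sub, TensorProduct.tmul_add]
  · -- φ ∘ R x = R (α x) ∘ φ
    intro x
    refine TensorProduct.ext' fun v w => ?_
    simp [pφRV, pφψW]
  · -- ψ ∘ R x = R (β x) ∘ ψ
    intro x
    refine TensorProduct.ext' fun v w => ?_
    simp [pψRV, pφψW]
  · -- the first compatibility identity
    intro x y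
    refine TensorProduct.ext' fun v w => ?_
    have k1 := congrArg (· ⊗ₜ[K] (ψW (ψW w))) (pV8 x y v)
    have k2 := congrArg ((ψV (ψV v)) ⊗ₜ[K] ·) (star x y w)
    simp only [TensorProduct.sub_tmul] at k1
    simp only [TensorProduct.tmul_sub] at k2
    simp only [LinearMap.sub_apply, LinearMap.add_apply, LinearMap.comp_apply,
      TensorProduct.map_tmul, LinearEquiv.coe_coe, map_add, map_sub,
      TensorProduct.tmul_sub, TensorProduct.tmul_add, TensorProduct.sub_tmul,
      TensorProduct.add_tmul,
      pφLV, pψLV, pφRV, pψRV, pφψV, pφLW, pψLW, pφRW, pψRW, pφψW, pφsLW, pφsRW,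
      pψφsW, hαβ, pαβs, pαsβ, pαsβs, hαmul, hβmul, pαsmul, pβsmul,
      LinearEquiv.apply_symm_apply, LinearEquiv.symm_apply_apply] at k1 k2 ⊢
    linear_combination (norm := module) k1 + k2
  · -- the second compatibility identity
    intro x y
    refine TensorProduct.ext' fun v w => ?_
    have k := congrArg (· ⊗ₜ[K] (ψW (φW (φW w)))) (pV9 x y v)
    simp only [TensorProduct.sub_tmul] at k
    simp only [LinearMap.sub_apply, LinearMap.add_apply, LinearMap.comp_apply,
      TensorProduct.map_tmul, LinearEquiv.coe_coe, map_add, map_sub,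
      TensorProduct.tmul_sub, TensorProduct.tmul_add, TensorProduct.sub_tmul,
      TensorProduct.add_tmul,
      pφLV, pψLV, pφRV, pψRV, pφψV, pφLW, pψLW, pφRW, pψRW, pφψW, pφsLW, pφsRW,
      pψφsW, hαβ, pαβs, pαsβ, pαsβs, hαmul, hβmul, pαsmul, pβsmul,
      LinearEquiv.apply_symm_apply, LinearEquiv.symm_apply_apply] at k ⊢
    linear_combination (norm := module) k
end

section
/- Let (A,Π,α,β) be a BiHom-left-symmetric algebra over a field K of characteristic zero (write x·y = Π(x,y)), and let π₁, π₂ be bilinear maps commuting with α and β that generate linear deformations Π_t¹ = Π + tπ₁ and Π_t² = Π + tπ₂. Suppose the two deformations are equivalent, i.e. there is a linear map N: A → A such that for every t ∈ K the map T_t = Id + tN is a homomorphism of BiHom-left-symmetric algebras from (A, Π_t², α, β) to (A, Π_t¹, α, β). Then π₂(x,y) − π₁(x,y) = N(x)·y + x·N(y) − N(x·y) for all x,y ∈ A; in particular π₂ − π₁ is the coboundary ∂¹(N) in the cohomology with coefficients in the adjoint representation, so π₁ and π₂ lie in the same cohomology class of H²(A;A). -/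
/-!
Expanding the homomorphism condition for `Id + tN` in powers of `t` gives a cubic in `t` without
constant term that vanishes for every `t`. Over a field of characteristic zero its linear
coefficient, `π₂ - π₁ - ∂¹N`, must then vanish.
-/

namespace IsLin

variable {K : Type*} [Field K] {A B : Type*} [AddCommGroup A] [Module K A]
    [AddCommGroup B] [Module K B] {f : A → B}

lemma map_zero (hf : IsLin K f) : f 0 = 0 := by
  simpa using hf 1 0 0

lemma map_add (hf : IsLin K f) (x y : A) : f (x + y) = f x + f y := by
  simpa using hf 1 x y

lemma map_smul (hf : IsLin K f) (c : K) (x : A) : f (c • x) = c • f x := by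
  simpa [hf.map_zero] using hf c x 0

end IsLin

namespace IsBilin

variable {K : Type*} [Field K] {A B C : Type*} [AddCommGroup A] [Module K A]
    [AddCommGroup B] [Module K B] [AddCommGroup C] [Module K C] {f : A → B → C}

lemma map_zero_left (hf : IsBilin K f) (y : B) : f 0 y = 0 := by
  simpa using hf.1 1 0 0 y

lemma map_add_left (hf : IsBilin K f) (x x' : A) (y : B) :
    f (x + x') y = f x y + f x' y := by
  simpa using hf.1 1 x x' y

lemma map_smul_left (hf : IsBilin K f) (c : K) (x : A) (y : B) :
    f (c • x) y = c • f x y := by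
  simpa [hf.map_zero_left] using hf.1 c x 0 y

lemma map_zero_right (hf : IsBilin K f) (x : A) : f x 0 = 0 := by
  simpa using hf.2 1 x 0 0

lemma map_add_right (hf : IsBilin K f) (x : A) (y y' : B) :
    f x (y + y') = f x y + f x y' := by
  simpa using hf.2 1 x y y'

lemma map_smul_right (hf : IsBilin K f) (c : K) (x : A) (y : B) :
    f x (c • y) = c • f x y := by
  simpa [hf.map_zero_right] using hf.2 c x y 0

end IsBilin

/-- The values `t = 1, -1, 2` already isolate the linear coefficient. -/
lemma eq_zero_of_forall_smul_add_sq_smul_add_cube_smul_eq_zero {K : Type*} [Field K]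
    [CharZero K] {V : Type*} [AddCommGroup V] [Module K V] {a b c : V}
    (h : ∀ t : K, t • a + t ^ 2 • b + t ^ 3 • c = 0) : a = 0 := by
  linear_combination (norm := module) h 1 - (3⁻¹ : K) • h (-1) - (6⁻¹ : K) • h 2

lemma smul_add_sq_smul_add_cube_smul_eq_zero_of_hom_eq {K : Type*} [Field K]
    {A : Type*} [AddCommGroup A] [Module K A] {mul π₁ : A → A → A} {N : A → A}
    (hmul : IsBilin K mul) (hπ₁ : IsBilin K π₁) (hN : IsLin K N) {x y p : A} {t : K}
    (h : (mul x y + t • p) + t • N (mul x y + t • p)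
      = mul (x + t • N x) (y + t • N y) + t • π₁ (x + t • N x) (y + t • N y)) :
    t • (p - π₁ x y - (mul (N x) y + mul x (N y) - N (mul x y)))
      + t ^ 2 • (N p - mul (N x) (N y) - π₁ (N x) y - π₁ x (N y))
      + t ^ 3 • (-π₁ (N x) (N y)) = 0 := by
  simp only [hmul.map_add_left, hmul.map_add_right, hmul.map_smul_left, hmul.map_smul_right,
    hπ₁.map_add_left, hπ₁.map_add_right, hπ₁.map_smul_left, hπ₁.map_smul_right,
    hN.map_add, hN.map_smul] at h
  linear_combination (norm := module) h

theorem stmt14_general (K : Type*) [Field K] [CharZero K]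
    {A : Type*} [AddCommGroup A] [Module K A]
    (mul : A → A → A) (α β : A → A)
    (halg : IsBiHomLS K mul α β)
    (π₁ π₂ : A → A → A) (hπ₁bil : IsBilin K π₁)
    (N : A → A) (hN : IsLin K N)
    (hhom : ∀ t : K,
      (∀ x y,
        (mul x y + t • π₂ x y) + t • N (mul x y + t • π₂ x y)
          = mul (x + t • N x) (y + t • N y) + t • π₁ (x + t • N x) (y + t • N y)) ∧
      (∀ x, α x + t • N (α x) = α (x + t • N x)) ∧
      (∀ x, β x + t • N (β x) = β (x + t • N x))) :
    ∀ x y, π₂ x y - π₁ x y = mul (N x) y + mul x (N y) - N (mul x y) :=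
  fun x y => sub_eq_zero.mp <| eq_zero_of_forall_smul_add_sq_smul_add_cube_smul_eq_zero fun t =>
    smul_add_sq_smul_add_cube_smul_eq_zero_of_hom_eq halg.1 hπ₁bil hN ((hhom t).1 x y)

/-- if two linear deformations `Π + tπ₁` and `Π + tπ₂` are equivalent via
`T_t = Id + tN`, then `π₂ − π₁ = ∂¹(N)` is the coboundary of `N` in the adjoint
representation, so `π₁` and `π₂` define the same class in `H²(A; A)`. -/
theorem stmt14 (K : Type*) [Field K] [CharZero K]
    {A : Type*} [AddCommGroup A] [Module K A]
    (mul : A → A → A) (α β : A → A)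
    (halg : IsBiHomLS K mul α β)
    (π₁ π₂ : A → A → A) (hπ₁bil : IsBilin K π₁) (hπ₂bil : IsBilin K π₂)
    (hπ₁α : ∀ x y, π₁ (α x) (α y) = α (π₁ x y))
    (hπ₁β : ∀ x y, π₁ (β x) (β y) = β (π₁ x y))
    (hπ₂α : ∀ x y, π₂ (α x) (α y) = α (π₂ x y))
    (hπ₂β : ∀ x y, π₂ (β x) (β y) = β (π₂ x y))
    (hdef₁ : ∀ t : K, IsBiHomLS K (fun x y => mul x y + t • π₁ x y) α β)
    (hdef₂ : ∀ t : K, IsBiHomLS K (fun x y => mul x y + t • π₂ x y) α β)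
    (N : A → A) (hN : IsLin K N)
    (hhom : ∀ t : K,
      (∀ x y,
        (mul x y + t • π₂ x y) + t • N (mul x y + t • π₂ x y)
          = mul (x + t • N x) (y + t • N y) + t • π₁ (x + t • N x) (y + t • N y)) ∧
      (∀ x, α x + t • N (α x) = α (x + t • N x)) ∧
      (∀ x, β x + t • N (β x) = β (x + t • N x))) :
    ∀ x y, π₂ x y - π₁ x y = mul (N x) y + mul x (N y) - N (mul x y) :=
  stmt14_general K mul α β halg π₁ π₂ hπ₁bil N hN hhom
end

section
/- Let N be a Nijenhuis operator on a BiHom-left-symmetric algebra (A,Π,α,β) over a field K of characteristic zero (write x·y = Π(x,y)), and define π(x,y) = x·_N y = N(x)·y + x·N(y) − N(x·y). Then π generates a linear deformation of (A,Π,α,β): for every t ∈ K, (A, Π + tπ, α, β) is a BiHom-left-symmetric algebra. Moreover this deformation is trivial: for every t ∈ K, T_t = Id + tN is a homomorphism of BiHom-left-symmetric algebras from (A, Π + tπ, α, β) to (A, Π, α, β). -/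
section Aux
variable {K : Type*} [Field K] {A : Type*} [AddCommGroup A] [Module K A]

theorem lin_add {f : A → A} (h : IsLin K f) : ∀ x y, f (x + y) = f x + f y := by
  intro x y; simpa using h 1 x y

theorem lin_zero {f : A → A} (h : IsLin K f) : f 0 = 0 := by
  have h1 : f 0 = f 0 + f 0 := by simpa using h 1 0 0
  exact (left_eq_add.mp h1)

theorem lin_smul {f : A → A} (h : IsLin K f) : ∀ (c : K) (x), f (c • x) = c • f x := by
  intro c x; have := h c x 0; simpa [lin_zero h] using this

theorem lin_sub {f : A → A} (h : IsLin K f) : ∀ x y, f (x - y) = f x - f y := by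
  intro x y
  have := h (-1) y x
  simp only [neg_one_smul, neg_add_eq_sub] at this
  exact this

theorem bil_addl {f : A → A → A} (h : IsBilin K f) : ∀ x x' y, f (x + x') y = f x y + f x' y := by
  intro x x' y; simpa using h.1 1 x x' y

theorem bil_zerol {f : A → A → A} (h : IsBilin K f) : ∀ y, f 0 y = 0 := by
  intro y
  have h1 : f 0 y = f 0 y + f 0 y := by simpa using h.1 1 0 0 y
  exact (left_eq_add.mp h1)

theorem bil_smull {f : A → A → A} (h : IsBilin K f) : ∀ (c : K) x y, f (c • x) y = c • f x y := by
  intro c x y; have := h.1 c x 0 y; simpa [bil_zerol h] using this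

theorem bil_addr {f : A → A → A} (h : IsBilin K f) : ∀ x y y', f x (y + y') = f x y + f x y' := by
  intro x y y'; simpa using h.2 1 x y y'

theorem bil_zeror {f : A → A → A} (h : IsBilin K f) : ∀ x, f x 0 = 0 := by
  intro x
  have h1 : f x 0 = f x 0 + f x 0 := by simpa using h.2 1 x 0 0
  exact (left_eq_add.mp h1)

theorem bil_smulr {f : A → A → A} (h : IsBilin K f) : ∀ (c : K) x y, f x (c • y) = c • f x y := by
  intro c x y; have := h.2 c x y 0; simpa [bil_zeror h] using this

theorem bil_subl {f : A → A → A} (h : IsBilin K f) : ∀ x x' y, f (x - x') y = f x y - f x' y := by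
  intro x x' y
  have := h.1 (-1) x' x y
  simp only [neg_one_smul, neg_add_eq_sub] at this
  exact this

theorem bil_subr {f : A → A → A} (h : IsBilin K f) : ∀ x y y', f x (y - y') = f x y - f x y' := by
  intro x y y'
  have := h.2 (-1) x y' y
  simp only [neg_one_smul, neg_add_eq_sub] at this
  exact this

theorem cubic_eq_zero [CharZero K] {a b c d : A}
    (h : ∀ s : K, a + s • b + (s * s) • c + (s * s * s) • d = 0) :
    a = 0 ∧ b = 0 ∧ c = 0 ∧ d = 0 := by
  have h0 : a = 0 := by simpa using h 0
  have h1 : b + c + d = 0 := by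
    have := h 1; rw [h0] at this; simpa using this
  have h2 : -b + c - d = 0 := by
    have := h (-1); rw [h0] at this
    simp only [neg_one_smul, neg_mul, one_mul, neg_neg, one_smul, neg_smul, zero_add] at this
    linear_combination (norm := module) this
  have hc : c = 0 := by
    have h2c : (2 : K) • c = 0 := by
      calc (2 : K) • c = (b + c + d) + (-b + c - d) := by module
        _ = 0 := by rw [h1, h2]; simp
    simpa using (smul_eq_zero.mp h2c).resolve_left (by norm_num)
  have h3 : (2 : K) • b + (8 : K) • d = 0 := by
    have := h 2; rw [h0, hc] at this
    simp only [smul_zero, add_zero, zero_add] at this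
    have e : (2 : K) • b + (8 : K) • d = (2:K) • b + ((2:K)*2*2) • d := by module
    rw [e]; linear_combination (norm := module) this
  have hbd : b + d = 0 := by
    have := h1; rw [hc] at this; simpa using this
  have hd : d = 0 := by
    have h6 : (6 : K) • d = 0 := by
      calc (6 : K) • d = ((2:K) • b + (8:K) • d) - (2:K) • (b + d) := by module
        _ = 0 := by rw [h3, hbd]; simp
    simpa using (smul_eq_zero.mp h6).resolve_left (by norm_num)
  have hb : b = 0 := by rw [hd] at hbd; simpa using hbd
  exact ⟨h0, hb, hc, hd⟩

end Aux
section Aux2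
variable {K : Type*} [Field K] {A : Type*} [AddCommGroup A] [Module K A]

/-- One side of the deformed left-symmetric identity, expanded as a quadratic in `s`. -/
theorem expand_cubic (mul P : A → A → A) (hbil : IsBilin K mul) (hPbil : IsBilin K P)
    (s : K) (u v w p q a : A) :
    (mul (u + s • v) w + s • P (u + s • v) w)
      - (mul a (p + s • q) + s • P a (p + s • q))
    = (mul u w - mul a p)
        + s • (mul v w + P u w - mul a q - P a p)
        + (s * s) • (P v w - P a q) := by
  simp only [bil_addl hbil, bil_smull hbil, bil_addr hbil, bil_smulr hbil,
    bil_addl hPbil, bil_smull hPbil, bil_addr hPbil, bil_smulr hPbil]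
  module

theorem nij_LS_core [CharZero K] (N : A → A) (hN : IsLin K N) (a b c : A)
    (h : ∀ s : K, (a + s • b + (s * s) • c) + s • N (a + s • b + (s * s) • c) = 0)
    (t : K) : a + t • b + (t * t) • c = 0 := by
  have h' : ∀ s : K, a + s • (b + N a) + (s * s) • (c + N b) + (s * s * s) • (N c) = 0 := by
    intro s
    have hs := h s
    simp only [lin_add hN, lin_smul hN] at hs
    linear_combination (norm := module) hs
  obtain ⟨h0, hb, hc, _⟩ := cubic_eq_zero h'
  have hb' : b = 0 := by rw [h0, lin_zero hN, add_zero] at hb; exact hb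
  have hc' : c = 0 := by rw [hb', lin_zero hN, add_zero] at hc; exact hc
  rw [h0, hb', hc']; simp

end Aux2
def Dmul {A : Type*} [AddCommGroup A] (mul : A → A → A) (N : A → A) (x y : A) : A :=
  mul (N x) y + mul x (N y) - N (mul x y)

/-- A Nijenhuis operator on a BiHom-left-symmetric algebra generates a trivial linear
deformation. -/
theorem stmt15 (K : Type*) [Field K] [CharZero K]
    {A : Type*} [AddCommGroup A] [Module K A]
    (mul : A → A → A) (α β : A → A)
    (halg : IsBiHomLS K mul α β)
    (N : A → A) (hN : IsLin K N)
    (hNα : ∀ x, N (α x) = α (N x)) (hNβ : ∀ x, N (β x) = β (N x))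
    (hNij : ∀ x y, mul (N x) (N y) = N (mul (N x) y + mul x (N y) - N (mul x y))) :
    ∀ t : K,
      IsBiHomLS K
        (fun x y => mul x y + t • (mul (N x) y + mul x (N y) - N (mul x y))) α β ∧
      IsLin K (fun z => z + t • N z) ∧
      (∀ x y,
        (mul x y + t • (mul (N x) y + mul x (N y) - N (mul x y)))
          + t • N (mul x y + t • (mul (N x) y + mul x (N y) - N (mul x y)))
          = mul (x + t • N x) (y + t • N y)) ∧
      (∀ x, α x + t • N (α x) = α (x + t • N x)) ∧
      (∀ x, β x + t • N (β x) = β (x + t • N x)) := by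
  obtain ⟨hbil, hlα, hlβ, hαβ, hαm, hβm, hLS⟩ := halg
  have hN' : ∀ (c : K) (x y : A), N (c • x + y) = c • N x + N y := hN
  have hPd : ∀ x y : A, Dmul mul N x y = mul (N x) y + mul x (N y) - N (mul x y) :=
    fun _ _ => rfl
  have hPbil : IsBilin K (Dmul mul N) := by
    constructor
    · intro c x x' y
      simp only [hPd, hN', bil_addl hbil, bil_smull hbil]
      module
    · intro c x y y'
      simp only [hPd, hN', bil_addr hbil, bil_smulr hbil]
      module
  have hNP : ∀ x y, N (Dmul mul N x y) = mul (N x) (N y) := fun x y => (hNij x y).symm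
  have hαP : ∀ x y, α (Dmul mul N x y) = Dmul mul N (α x) (α y) := by
    intro x y
    simp only [hPd, lin_sub hlα, lin_add hlα, hαm, ← hNα]
  have hβP : ∀ x y, β (Dmul mul N x y) = Dmul mul N (β x) (β y) := by
    intro x y
    simp only [hPd, lin_sub hlβ, lin_add hlβ, hβm, ← hNβ]
  have hTα : ∀ (s : K) (x : A), α x + s • N (α x) = α (x + s • N x) := by
    intro s x; simp only [lin_add hlα, lin_smul hlα, hNα]
  have hTβ : ∀ (s : K) (x : A), β x + s • N (β x) = β (x + s • N x) := by
    intro s x; simp only [lin_add hlβ, lin_smul hlβ, hNβ]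
  have hhom : ∀ (s : K) (x y : A),
      (mul x y + s • Dmul mul N x y) + s • N (mul x y + s • Dmul mul N x y)
        = mul (x + s • N x) (y + s • N y) := by
    intro s x y
    have e0 : N (mul x y + s • Dmul mul N x y) = N (mul x y) + s • mul (N x) (N y) := by
      rw [lin_add hN, lin_smul hN, hNP]
    rw [e0, hPd]
    simp only [bil_addl hbil, bil_smull hbil, bil_addr hbil, bil_smulr hbil]
    module
  intro t
  refine ⟨?_, ?_, hhom t, hTα t, hTβ t⟩
  · refine ⟨⟨?_, ?_⟩, hlα, hlβ, hαβ, ?_, ?_, ?_⟩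
    · intro c x x' y
      show mul (c • x + x') y + t • Dmul mul N (c • x + x') y
          = c • (mul x y + t • Dmul mul N x y) + (mul x' y + t • Dmul mul N x' y)
      rw [hbil.1, hPbil.1]; module
    · intro c x y y'
      show mul x (c • y + y') + t • Dmul mul N x (c • y + y')
          = c • (mul x y + t • Dmul mul N x y) + (mul x y' + t • Dmul mul N x y')
      rw [hbil.2, hPbil.2]; module
    · intro x y
      show α (mul x y + t • Dmul mul N x y)
          = mul (α x) (α y) + t • Dmul mul N (α x) (α y)
      rw [lin_add hlα, lin_smul hlα, hαm, hαP]
    · intro x y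
      show β (mul x y + t • Dmul mul N x y)
          = mul (β x) (β y) + t • Dmul mul N (β x) (β y)
      rw [lin_add hlβ, lin_smul hlβ, hβm, hβP]
    · intro x y z
      have hkey : ∀ s : K,
          (((mul (mul (β x) (α y)) (α (β z)) - mul (α (β x)) (mul (α y) z)) - (mul (mul (β y) (α x)) (α (β z)) - mul (α (β y)) (mul (α x) z))) + s • ((mul (Dmul mul N (β x) (α y)) (α (β z)) + Dmul mul N (mul (β x) (α y)) (α (β z)) - mul (α (β x)) (Dmul mul N (α y) z) - Dmul mul N (α (β x)) (mul (α y) z)) - (mul (Dmul mul N (β y) (α x)) (α (β z)) + Dmul mul N (mul (β y) (α x)) (α (β z)) - mul (α (β y)) (Dmul mul N (α x) z) - Dmul mul N (α (β y)) (mul (α x) z))) + (s * s) • ((Dmul mul N (Dmul mul N (β x) (α y)) (α (β z)) - Dmul mul N (α (β x)) (Dmul mul N (α y) z)) - (Dmul mul N (Dmul mul N (β y) (α x)) (α (β z)) - Dmul mul N (α (β y)) (Dmul mul N (α x) z))))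
            + s • N (((mul (mul (β x) (α y)) (α (β z)) - mul (α (β x)) (mul (α y) z)) - (mul (mul (β y) (α x)) (α (β z)) - mul (α (β y)) (mul (α x) z))) + s • ((mul (Dmul mul N (β x) (α y)) (α (β z)) + Dmul mul N (mul (β x) (α y)) (α (β z)) - mul (α (β x)) (Dmul mul N (α y) z) - Dmul mul N (α (β x)) (mul (α y) z)) - (mul (Dmul mul N (β y) (α x)) (α (β z)) + Dmul mul N (mul (β y) (α x)) (α (β z)) - mul (α (β y)) (Dmul mul N (α x) z) - Dmul mul N (α (β y)) (mul (α x) z))) + (s * s) • ((Dmul mul N (Dmul mul N (β x) (α y)) (α (β z)) - Dmul mul N (α (β x)) (Dmul mul N (α y) z)) - (Dmul mul N (Dmul mul N (β y) (α x)) (α (β z)) - Dmul mul N (α (β y)) (Dmul mul N (α x) z)))) = 0 := by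
        intro s
        have e1 := expand_cubic mul (Dmul mul N) hbil hPbil s
          (mul (β x) (α y)) (Dmul mul N (β x) (α y)) (α (β z)) (mul (α y) z) (Dmul mul N (α y) z) (α (β x))
        have e2 := expand_cubic mul (Dmul mul N) hbil hPbil s
          (mul (β y) (α x)) (Dmul mul N (β y) (α x)) (α (β z)) (mul (α x) z) (Dmul mul N (α x) z) (α (β y))
        have g1 : (mul (mul (β x) (α y) + s • Dmul mul N (β x) (α y)) (α (β z)) + s • Dmul mul N (mul (β x) (α y) + s • Dmul mul N (β x) (α y)) (α (β z))) + s • N (mul (mul (β x) (α y) + s • Dmul mul N (β x) (α y)) (α (β z)) + s • Dmul mul N (mul (β x) (α y) + s • Dmul mul N (β x) (α y)) (α (β z)))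
            = mul (mul (β (x + s • N x)) (α (y + s • N y))) (α (β (z + s • N z))) := by
          simp only [hhom, hTα, hTβ]
        have g2 : (mul (α (β x)) (mul (α y) z + s • Dmul mul N (α y) z) + s • Dmul mul N (α (β x)) (mul (α y) z + s • Dmul mul N (α y) z)) + s • N (mul (α (β x)) (mul (α y) z + s • Dmul mul N (α y) z) + s • Dmul mul N (α (β x)) (mul (α y) z + s • Dmul mul N (α y) z))
            = mul (α (β (x + s • N x))) (mul (α (y + s • N y)) (z + s • N z)) := by
          simp only [hhom, hTα, hTβ]
        have g3 : (mul (mul (β y) (α x) + s • Dmul mul N (β y) (α x)) (α (β z)) + s • Dmul mul N (mul (β y) (α x) + s • Dmul mul N (β y) (α x)) (α (β z))) + s • N (mul (mul (β y) (α x) + s • Dmul mul N (β y) (α x)) (α (β z)) + s • Dmul mul N (mul (β y) (α x) + s • Dmul mul N (β y) (α x)) (α (β z)))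
            = mul (mul (β (y + s • N y)) (α (x + s • N x))) (α (β (z + s • N z))) := by
          simp only [hhom, hTα, hTβ]
        have g4 : (mul (α (β y)) (mul (α x) z + s • Dmul mul N (α x) z) + s • Dmul mul N (α (β y)) (mul (α x) z + s • Dmul mul N (α x) z)) + s • N (mul (α (β y)) (mul (α x) z + s • Dmul mul N (α x) z) + s • Dmul mul N (α (β y)) (mul (α x) z + s • Dmul mul N (α x) z))
            = mul (α (β (y + s • N y))) (mul (α (x + s • N x)) (z + s • N z)) := by
          simp only [hhom, hTα, hTβ]
        have h4 : mul (mul (β (x + s • N x)) (α (y + s • N y))) (α (β (z + s • N z)))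
              - mul (α (β (x + s • N x))) (mul (α (y + s • N y)) (z + s • N z))
              - (mul (mul (β (y + s • N y)) (α (x + s • N x))) (α (β (z + s • N z)))
              - mul (α (β (y + s • N y))) (mul (α (x + s • N x)) (z + s • N z))) = 0 := by
          rw [sub_eq_zero]; exact hLS _ _ _
        have hz : ((mul (mul (β x) (α y) + s • Dmul mul N (β x) (α y)) (α (β z)) + s • Dmul mul N (mul (β x) (α y) + s • Dmul mul N (β x) (α y)) (α (β z))) - (mul (α (β x)) (mul (α y) z + s • Dmul mul N (α y) z) + s • Dmul mul N (α (β x)) (mul (α y) z + s • Dmul mul N (α y) z))) - ((mul (mul (β y) (α x) + s • Dmul mul N (β y) (α x)) (α (β z)) + s • Dmul mul N (mul (β y) (α x) + s • Dmul mul N (β y) (α x)) (α (β z))) - (mul (α (β y)) (mul (α x) z + s • Dmul mul N (α x) z) + s • Dmul mul N (α (β y)) (mul (α x) z + s • Dmul mul N (α x) z)))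
            + s • N (((mul (mul (β x) (α y) + s • Dmul mul N (β x) (α y)) (α (β z)) + s • Dmul mul N (mul (β x) (α y) + s • Dmul mul N (β x) (α y)) (α (β z))) - (mul (α (β x)) (mul (α y) z + s • Dmul mul N (α y) z) + s • Dmul mul N (α (β x)) (mul (α y) z + s • Dmul mul N (α y) z))) - ((mul (mul (β y) (α x) + s • Dmul mul N (β y) (α x)) (α (β z)) + s • Dmul mul N (mul (β y) (α x) + s • Dmul mul N (β y) (α x)) (α (β z))) - (mul (α (β y)) (mul (α x) z + s • Dmul mul N (α x) z) + s • Dmul mul N (α (β y)) (mul (α x) z + s • Dmul mul N (α x) z)))) = 0 := by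
          simp only [lin_sub hN]
          linear_combination (norm := module) g1 - g2 - g3 + g4 + h4
        rw [e1, e2] at hz
        simp only [lin_add hN, lin_sub hN, lin_smul hN] at hz ⊢
        linear_combination (norm := module) hz
      have hfin := nij_LS_core N hN _ _ _ hkey t
      show (mul (mul (β x) (α y) + t • Dmul mul N (β x) (α y)) (α (β z)) + t • Dmul mul N (mul (β x) (α y) + t • Dmul mul N (β x) (α y)) (α (β z))) - (mul (α (β x)) (mul (α y) z + t • Dmul mul N (α y) z) + t • Dmul mul N (α (β x)) (mul (α y) z + t • Dmul mul N (α y) z)) = (mul (mul (β y) (α x) + t • Dmul mul N (β y) (α x)) (α (β z)) + t • Dmul mul N (mul (β y) (α x) + t • Dmul mul N (β y) (α x)) (α (β z))) - (mul (α (β y)) (mul (α x) z + t • Dmul mul N (α x) z) + t • Dmul mul N (α (β y)) (mul (α x) z + t • Dmul mul N (α x) z))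
      rw [← sub_eq_zero]
      rw [expand_cubic mul (Dmul mul N) hbil hPbil t (mul (β x) (α y)) (Dmul mul N (β x) (α y)) (α (β z)) (mul (α y) z) (Dmul mul N (α y) z) (α (β x)),
        expand_cubic mul (Dmul mul N) hbil hPbil t (mul (β y) (α x)) (Dmul mul N (β y) (α x)) (α (β z)) (mul (α x) z) (Dmul mul N (α x) z) (α (β y))]
      linear_combination (norm := module) hfin
  · intro c x y
    show (c • x + y) + t • N (c • x + y) = c • (x + t • N x) + (y + t • N y)
    rw [hN']
    module
end

section
/- Let N be a Nijenhuis operator on a regular BiHom-left-symmetric algebra (A,·,α,β) over a field K of characteristic zero. Then N is a Nijenhuis operator on the sub-adjacent BiHom-Lie algebra A^C: for all x,y ∈ A, [N(x),N(y)]_C = N([N(x),y]_C + [x,N(y)]_C − N[x,y]_C), where [x,y]_C = x·y − α⁻¹β(y)·αβ⁻¹(x). -/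
/-- a Nijenhuis operator `N` on a regular BiHom-left-symmetric algebra is a
Nijenhuis operator on the sub-adjacent BiHom-Lie algebra `A^C`, with bracket
`[x,y]_C = x·y − α⁻¹β(y)·αβ⁻¹(x)`. -/
theorem stmt18 (K : Type*) [Field K] [CharZero K]
    {A : Type*} [AddCommGroup A] [Module K A]
    (mul : A → A → A) (α β : A ≃ₗ[K] A)
    (halg : IsBiHomLS K mul (⇑α) (⇑β))
    (N : A → A) (hN : IsLin K N)
    (hNα : ∀ x, N (α x) = α (N x)) (hNβ : ∀ x, N (β x) = β (N x))
    (hNij : ∀ x y, mul (N x) (N y) = N (mul (N x) y + mul x (N y) - N (mul x y))) :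
    ∀ x y,
      (fun a b => mul a b - mul (α.symm (β b)) (α (β.symm a))) (N x) (N y)
        = N ((fun a b => mul a b - mul (α.symm (β b)) (α (β.symm a))) (N x) y
            + (fun a b => mul a b - mul (α.symm (β b)) (α (β.symm a))) x (N y)
            - N ((fun a b => mul a b - mul (α.symm (β b)) (α (β.symm a))) x y)) := by
  intro x y
  have hadd : ∀ a b, N (a + b) = N a + N b := by
    intro a b; have := hN 1 a b; simpa using this
  have hsub : ∀ a b, N (a - b) = N a - N b := by
    intro a b
    have := hN (-1 : K) b a
    simp only [neg_smul, one_smul, neg_one_smul] at this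
    rw [sub_eq_neg_add, this, sub_eq_neg_add]
  have hNαs : ∀ z, N (α.symm z) = α.symm (N z) := by
    intro z
    apply α.injective
    rw [← hNα, LinearEquiv.apply_symm_apply, LinearEquiv.apply_symm_apply]
  have hNβs : ∀ z, N (β.symm z) = β.symm (N z) := by
    intro z
    apply β.injective
    rw [← hNβ, LinearEquiv.apply_symm_apply, LinearEquiv.apply_symm_apply]
  have e1 : α.symm (β (N y)) = N (α.symm (β y)) := by rw [← hNβ, ← hNαs]
  have e2 : α (β.symm (N x)) = N (α (β.symm x)) := by rw [← hNβs, ← hNα]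
  simp only [e1, e2]
  rw [hNij x y, hNij (α.symm (β y)) (α (β.symm x))]
  simp only [hadd, hsub]
  abel
end
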